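/- Let Γ = ⟨α,β⟩ with gcd(α,β)=1, 1<α<β, and Δ a Γ-semimodule. If ℓ ∈ ℕ with ℓ ∉ Δ, then there exists a minimal generator h of Syz(Δ) with ℓ ≤ h − α − β; in particular every natural number greater than M − α − β lies in Δ, where M is the largest minimal generator of Syz(Δ). -/
import Mathlib


open Set

/-- A numerical semigroup: additive submonoid of ℕ with finite complement. -/
def IsNumSgp (Γ : Set ℕ) : Prop :=
  0 ∈ Γ ∧ (∀ x ∈ Γ, ∀ y ∈ Γ, x + y ∈ Γ) ∧ Γᶜ.Finite

/-- A Γ-semimodule: nonempty subset Δ ⊆ ℕ with Δ + Γ ⊆ Δ. -/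
def IsGammaSemimodule (Γ Δ : Set ℕ) : Prop :=
  Δ.Nonempty ∧ ∀ x ∈ Δ, ∀ g ∈ Γ, x + g ∈ Δ

/-- The shifted copy x + Γ. -/
def shift (Γ : Set ℕ) (x : ℕ) : Set ℕ := {y | ∃ g ∈ Γ, y = x + g}

/-- E is a system of generators of Δ over Γ. -/
def GeneratesSgp (Γ E Δ : Set ℕ) : Prop := Δ = ⋃ x ∈ E, shift Γ x

/-- E is the minimal system of generators of Δ over Γ. -/
def IsMinGen (Γ E Δ : Set ℕ) : Prop :=
  E ⊆ Δ ∧ GeneratesSgp Γ E Δ ∧ ∀ E' ⊆ E, GeneratesSgp Γ E' Δ → E' = E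

/-- The conductorOf of Δ ⊆ ℕ: the least c such that every n ≥ c belongs to Δ. -/
noncomputable def conductorOf (Δ : Set ℕ) : ℕ := sInf {c | ∀ n, c ≤ n → n ∈ Δ}

/-- The Apéry set of Δ with respect to s: Δ \ (s + Δ). -/
def Apery (Δ : Set ℕ) (s : ℕ) : Set ℕ := {x | x ∈ Δ ∧ ¬∃ d ∈ Δ, x = s + d}

/-- The syzygy semimodule of a set I of generators. -/
def Syz (Γ I : Set ℕ) : Set ℕ :=
  ⋃ g ∈ I, ⋃ g' ∈ I, ⋃ (_ : g ≠ g'), (shift Γ g ∩ shift Γ g')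

/-- The numerical semigroup ⟨α, β⟩ = αℕ + βℕ. -/
def twoGen (α β : ℕ) : Set ℕ := {n | ∃ u v : ℕ, n = u * α + v * β}

/-- E ⊆ ℕ is Γ-lean: |x - y| ∉ Γ for all distinct x, y ∈ E. -/
def GammaLean (Γ E : Set ℕ) : Prop :=
  ∀ x ∈ E, ∀ y ∈ E, x ≠ y → max x y - min x y ∉ Γ

/-- The dual of Δ : {z ∈ ℤ | z + Δ ⊆ Γ}. -/
def DualZ (Γ Δ : Set ℕ) : Set ℤ := {z | ∀ d ∈ Δ, ∃ g ∈ Γ, z + (d : ℤ) = (g : ℤ)}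

/-- Shifted copy x + Γ inside ℤ. -/
def shiftZ (Γ : Set ℕ) (x : ℤ) : Set ℤ := {y | ∃ g ∈ Γ, y = x + (g : ℤ)}

def GeneratesZ (Γ : Set ℕ) (E D : Set ℤ) : Prop := D = ⋃ x ∈ E, shiftZ Γ x

def IsMinGenZ (Γ : Set ℕ) (E D : Set ℤ) : Prop :=
  E ⊆ D ∧ GeneratesZ Γ E D ∧ ∀ E' ⊆ E, GeneratesZ Γ E' D → E' = E


lemma twoGen_add {α β x y : ℕ} (hx : x ∈ twoGen α β) (hy : y ∈ twoGen α β) :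
    x + y ∈ twoGen α β := by
  obtain ⟨u, v, rfl⟩ := hx
  obtain ⟨u', v', rfl⟩ := hy
  exact ⟨u + u', v + v', by ring⟩

lemma mem_shift' {α β g x : ℕ} :
    x ∈ shift (twoGen α β) g ↔ ∃ u v : ℕ, x = g + (u * α + v * β) := by
  constructor
  · rintro ⟨γ, ⟨u, v, rfl⟩, rfl⟩
    exact ⟨u, v, rfl⟩
  · rintro ⟨u, v, rfl⟩
    exact ⟨u * α + v * β, ⟨u, v, rfl⟩, rfl⟩

lemma mem_Syz' {Γ I : Set ℕ} {x : ℕ} :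
    x ∈ Syz Γ I ↔ ∃ g ∈ I, ∃ g' ∈ I, g ≠ g' ∧ x ∈ shift Γ g ∧ x ∈ shift Γ g' := by
  constructor
  · intro hx
    simp only [Syz, mem_iUnion, mem_inter_iff] at hx
    obtain ⟨g, hg, g', hg', hne, h1, h2⟩ := hx
    exact ⟨g, hg, g', hg', hne, h1, h2⟩
  · rintro ⟨g, hg, g', hg', hne, h1, h2⟩
    simp only [Syz, mem_iUnion, mem_inter_iff]
    exact ⟨g, hg, g', hg', hne, h1, h2⟩

lemma shift_add {α β g x γ : ℕ} (hx : x ∈ shift (twoGen α β) g) (hγ : γ ∈ twoGen α β) :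
    x + γ ∈ shift (twoGen α β) g := by
  obtain ⟨γ₀, h₀, rfl⟩ := hx
  exact ⟨γ₀ + γ, twoGen_add h₀ hγ, by omega⟩

lemma Syz_add {α β : ℕ} {I : Set ℕ} {x γ : ℕ} (hx : x ∈ Syz (twoGen α β) I)
    (hγ : γ ∈ twoGen α β) : x + γ ∈ Syz (twoGen α β) I := by
  obtain ⟨g, hg, g', hg', hne, h1, h2⟩ := mem_Syz'.mp hx
  exact mem_Syz'.mpr ⟨g, hg, g', hg', hne, shift_add h1 hγ, shift_add h2 hγ⟩

lemma exists_param {α β : ℕ} (hα : 0 < α) (hcop : Nat.Coprime α β)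
    {ℓ g : ℕ} (h : ℓ ∉ shift (twoGen α β) g) :
    ∃ p b : ℤ, 1 ≤ p ∧ 0 ≤ b ∧ b < α ∧ (g : ℤ) = (ℓ : ℤ) + p * α - b * β := by
  obtain ⟨x0, y0, h1⟩ : IsCoprime (α : ℤ) (β : ℤ) := Nat.isCoprime_iff_coprime.mpr hcop
  have hαZ : (0 : ℤ) < α := by exact_mod_cast hα
  have hαne : (α : ℤ) ≠ 0 := hαZ.ne'
  set L : ℤ := (ℓ : ℤ) - g with hL
  set b : ℤ := (L * y0) % α with hbdef
  have hb0 : 0 ≤ b := Int.emod_nonneg _ hαne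
  have hbα : b < α := Int.emod_lt_of_pos _ hαZ
  have hmod : b = L * y0 - α * (L * y0 / α) := by rw [hbdef]; exact Int.emod_def _ _
  have hd : (α : ℤ) ∣ (L - b * β) := by
    refine ⟨L * x0 + (L * y0 / α) * β, ?_⟩
    linear_combination (-(β : ℤ)) * hmod - L * h1
  obtain ⟨a, ha⟩ := hd
  have haneg : a < 0 := by
    by_contra hge
    push_neg at hge
    apply h
    refine mem_shift'.mpr ⟨a.toNat, b.toNat, ?_⟩
    have hz : (ℓ : ℤ) = (g : ℤ) + ((a.toNat : ℤ) * α + (b.toNat : ℤ) * β) := by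
      rw [Int.toNat_of_nonneg hge, Int.toNat_of_nonneg hb0]
      linear_combination ha - hL
    exact_mod_cast hz
  exact ⟨-a, b, by omega, hb0, hbα, by linear_combination -ha + hL⟩

lemma mem_shift_iff_param {α β : ℕ} (hα : 0 < α) (hβ : 0 < β) (hcop : Nat.Coprime α β)
    {ℓ : ℤ} {g x : ℕ} {p b P B : ℤ}
    (hb0 : 0 ≤ b) (hbα : b < α) (hB0 : 0 ≤ B) (hBα : B < α)
    (hg : (g : ℤ) = ℓ + p * α - b * β) (hx : (x : ℤ) = ℓ + P * α - B * β) :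
    x ∈ shift (twoGen α β) g ↔ ((B ≤ b ∧ p ≤ P) ∨ (b < B ∧ p + β ≤ P)) := by
  have hαZ : (0 : ℤ) < α := by exact_mod_cast hα
  have hβZ : (0 : ℤ) < β := by exact_mod_cast hβ
  have hco : IsCoprime (α : ℤ) (β : ℤ) := Nat.isCoprime_iff_coprime.mpr hcop
  constructor
  · intro hmem
    obtain ⟨u, v, hxe⟩ := mem_shift'.mp hmem
    have heq : (x : ℤ) = (g : ℤ) + ((u : ℤ) * α + (v : ℤ) * β) := by exact_mod_cast hxe
    have key : (P - p - u) * α = ((v : ℤ) + B - b) * β := by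
      linear_combination heq - hx + hg
    have hdvd : (α : ℤ) ∣ ((v : ℤ) + B - b) := by
      refine hco.dvd_of_dvd_mul_right ⟨P - p - u, ?_⟩
      linear_combination -key
    obtain ⟨c, hc⟩ := hdvd
    rw [mul_comm] at hc
    have hu : P - p - (u : ℤ) = c * β :=
      mul_right_cancel₀ hαZ.ne' (by linear_combination key + β * hc)
    have hv0 : (0 : ℤ) ≤ v := by positivity
    have hu0 : (0 : ℤ) ≤ u := by positivity
    rcases lt_trichotomy c 0 with hcneg | rfl | hcpos
    · exfalso
      have hca : c * α ≤ -1 * α := mul_le_mul_of_nonneg_right (by omega) hαZ.le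
      linarith [hc]
    · left
      simp only [zero_mul, mul_zero] at hc hu
      constructor <;> linarith
    · have hcb : 1 * β ≤ c * β := mul_le_mul_of_nonneg_right hcpos hβZ.le
      rcases le_or_gt B b with hBb | hbB
      · exact Or.inl ⟨hBb, by linarith⟩
      · exact Or.inr ⟨hbB, by linarith⟩
  · rintro (⟨h1, h2⟩ | ⟨h1, h2⟩)
    · refine mem_shift'.mpr ⟨(P - p).toNat, (b - B).toNat, ?_⟩
      have hZ : (x : ℤ) = (g : ℤ) + (((P - p).toNat : ℤ) * α + ((b - B).toNat : ℤ) * β) := by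
        rw [Int.toNat_of_nonneg (by linarith), Int.toNat_of_nonneg (by linarith)]
        linear_combination hx - hg
      exact_mod_cast hZ
    · refine mem_shift'.mpr ⟨(P - p - β).toNat, (b - B + α).toNat, ?_⟩
      have hZ : (x : ℤ) = (g : ℤ) + (((P - p - β).toNat : ℤ) * α + ((b - B + α).toNat : ℤ) * β) := by
        rw [Int.toNat_of_nonneg (by linarith), Int.toNat_of_nonneg (by linarith)]
        linear_combination hx - hg
      exact_mod_cast hZ

lemma notin_shift_of_minGen {Γ I Δ : Set ℕ}
    (hΓadd : ∀ x ∈ Γ, ∀ y ∈ Γ, x + y ∈ Γ)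
    (hI : IsMinGen Γ I Δ) {g g' : ℕ} (hg : g ∈ I) (hg' : g' ∈ I) (hne : g ≠ g') :
    g' ∉ shift Γ g := by
  rintro ⟨γ, hγ, hgg⟩
  have hgen : Δ = ⋃ x ∈ I, shift Γ x := hI.2.1
  have hgen' : GeneratesSgp Γ (I \ {g'}) Δ := by
    show Δ = ⋃ x ∈ I \ {g'}, shift Γ x
    apply Set.Subset.antisymm
    · intro d hd
      rw [hgen] at hd
      obtain ⟨x, hx, hdx⟩ := mem_iUnion₂.mp hd
      by_cases hxg : x = g'
      · subst hxg
        obtain ⟨γ', hγ', hd'⟩ := hdx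
        exact mem_iUnion₂.mpr ⟨g, ⟨hg, hne⟩, ⟨γ + γ', hΓadd _ hγ _ hγ', by omega⟩⟩
      · exact mem_iUnion₂.mpr ⟨x, ⟨hx, hxg⟩, hdx⟩
    · rw [hgen]
      exact iUnion₂_mono' fun x hx => ⟨x, hx.1, subset_rfl⟩
  have heq := hI.2.2 _ diff_subset hgen'
  have : g' ∈ I \ {g'} := by rw [heq]; exact hg'
  exact this.2 rfl
set_option maxHeartbeats 1600000 in
theorem gap_bounded_by_syzygy (α β M : ℕ) (hα : 1 < α) (hαβ : α < β)
    (hcop : Nat.Coprime α β) (Δ I J : Set ℕ)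
    (hΔ : IsGammaSemimodule (twoGen α β) Δ)
    (hI : IsMinGen (twoGen α β) I Δ)
    (hJ : IsMinGen (twoGen α β) J (Syz (twoGen α β) I))
    (hM : IsGreatest J M) :
    (∀ ℓ : ℕ, ℓ ∉ Δ → ∃ h ∈ J, (ℓ : ℤ) ≤ (h : ℤ) - α - β) ∧
    (∀ x : ℕ, (M : ℤ) - α - β < (x : ℤ) → x ∈ Δ) := by
  classical
  have hα0 : 0 < α := by omega
  have hβ0 : 0 < β := by omega
  have hαZ : (0:ℤ) < α := by exact_mod_cast hα0
  have hβZ : (0:ℤ) < β := by exact_mod_cast hβ0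
  have hadd : ∀ x ∈ twoGen α β, ∀ y ∈ twoGen α β, x + y ∈ twoGen α β :=
    fun x hx y hy => twoGen_add hx hy
  obtain ⟨gA, hgA, gB, hgB, hAB, -, -⟩ := mem_Syz'.mp (hJ.1 hM.1)
  have main : ∀ ℓ : ℕ, ℓ ∉ Δ → ∃ h ∈ J, (ℓ : ℤ) ≤ (h : ℤ) - α - β := by
    intro ℓ hℓ
    have hgen : Δ = ⋃ x ∈ I, shift (twoGen α β) x := hI.2.1
    have hnot : ∀ g ∈ I, ℓ ∉ shift (twoGen α β) g := by
      intro g hg hc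
      exact hℓ (hgen ▸ mem_iUnion₂.mpr ⟨g, hg, hc⟩)
    have hparam : ∀ g : ℕ, ∃ p b : ℤ, g ∈ I →
        (1 ≤ p ∧ 0 ≤ b ∧ b < α ∧ (g : ℤ) = (ℓ:ℤ) + p * α - b * β) := by
      intro g
      by_cases hg : g ∈ I
      · obtain ⟨p, b, h1, h2, h3, h4⟩ := exists_param hα0 hcop (hnot g hg)
        exact ⟨p, b, fun _ => ⟨h1, h2, h3, h4⟩⟩
      · exact ⟨1, 0, fun h => absurd h hg⟩
    choose p b hpb using hparam
    have hp1 : ∀ g ∈ I, 1 ≤ p g := fun g hg => (hpb g hg).1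
    have hb0 : ∀ g ∈ I, 0 ≤ b g := fun g hg => (hpb g hg).2.1
    have hbα : ∀ g ∈ I, b g < α := fun g hg => (hpb g hg).2.2.1
    have heq : ∀ g ∈ I, (g:ℤ) = (ℓ:ℤ) + p g * α - b g * β := fun g hg => (hpb g hg).2.2.2
    have hnsh : ∀ g ∈ I, ∀ g' ∈ I, g ≠ g' → g' ∉ shift (twoGen α β) g :=
      fun g hg g' hg' hne => notin_shift_of_minGen hadd hI hg hg' hne
    have hmono : ∀ g ∈ I, ∀ g' ∈ I, b g < b g' → p g < p g' ∧ p g' < p g + β := by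
      intro g hg g' hg' hbb
      have hne : g ≠ g' := by rintro rfl; exact lt_irrefl _ hbb
      have h1 := hnsh g' hg' g hg hne.symm
      have h2 := hnsh g hg g' hg' hne
      rw [mem_shift_iff_param hα0 hβ0 hcop (hb0 g' hg') (hbα g' hg') (hb0 g hg) (hbα g hg)
        (heq g' hg') (heq g hg)] at h1
      rw [mem_shift_iff_param hα0 hβ0 hcop (hb0 g hg) (hbα g hg) (hb0 g' hg') (hbα g' hg')
        (heq g hg) (heq g' hg')] at h2
      constructor <;> omega
    have hbinj : ∀ g ∈ I, ∀ g' ∈ I, b g = b g' → g = g' := by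
      intro g hg g' hg' hbe
      by_contra hne
      have h1 := hnsh g' hg' g hg (fun h => hne (h.symm))
      have h2 := hnsh g hg g' hg' hne
      rw [mem_shift_iff_param hα0 hβ0 hcop (hb0 g' hg') (hbα g' hg') (hb0 g hg) (hbα g hg)
        (heq g' hg') (heq g hg)] at h1
      rw [mem_shift_iff_param hα0 hβ0 hcop (hb0 g hg) (hbα g hg) (hb0 g' hg') (hbα g' hg')
        (heq g hg) (heq g' hg')] at h2
      omega
    have hpinj : ∀ g ∈ I, ∀ g' ∈ I, p g = p g' → g = g' := by
      intro g hg g' hg' hpe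
      rcases lt_trichotomy (b g) (b g') with h | h | h
      · have := (hmono g hg g' hg' h).1; omega
      · exact hbinj g hg g' hg' h
      · have := (hmono g' hg' g hg h).1; omega
    -- maximal b
    set Pb : ℕ → Prop := fun n => ∃ g ∈ I, b g = (n:ℤ) with hPbdef
    have hPbA : Pb (b gA).toNat := ⟨gA, hgA, (Int.toNat_of_nonneg (hb0 gA hgA)).symm⟩
    have hleA : (b gA).toNat ≤ α := by
      have h1 := hbα gA hgA; have h2 := hb0 gA hgA; omega
    obtain ⟨gk, hgk, hbkeq⟩ : Pb (Nat.findGreatest Pb α) := Nat.findGreatest_spec hleA hPbA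
    have hbmax : ∀ g ∈ I, b g ≤ b gk := by
      intro g hg
      have h1 : (b g).toNat ≤ α := by
        have := hbα g hg; have := hb0 g hg; omega
      have h2 : Pb (b g).toNat := ⟨g, hg, (Int.toNat_of_nonneg (hb0 g hg)).symm⟩
      have h3 := Nat.le_findGreatest (P := Pb) h1 h2
      have h4 := hb0 g hg
      rw [hbkeq]
      omega
    -- minimal p
    obtain ⟨g1, hg1, hp1eq⟩ := Nat.sInf_mem
      (s := {n : ℕ | ∃ g ∈ I, p g = (n:ℤ)})
      ⟨(p gA).toNat, gA, hgA, (Int.toNat_of_nonneg (by linarith [hp1 gA hgA])).symm⟩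
    have hpmin : ∀ g ∈ I, p g1 ≤ p g := by
      intro g hg
      have h1 : sInf {n : ℕ | ∃ g ∈ I, p g = (n:ℤ)} ≤ (p g).toNat :=
        Nat.sInf_le ⟨g, hg, (Int.toNat_of_nonneg (by linarith [hp1 g hg])).symm⟩
      have h2 := hp1 g hg
      rw [hp1eq]
      omega
    -- g1 ≠ gk and b g1 < b gk
    have hABb : b gA ≠ b gB := fun h => hAB (hbinj _ hgA _ hgB h)
    have hex : ∃ g0 ∈ I, b g0 < b gk := by
      rcases lt_or_gt_of_ne hABb with h | h
      · exact ⟨gA, hgA, lt_of_lt_of_le h (hbmax gB hgB)⟩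
      · exact ⟨gB, hgB, lt_of_lt_of_le h (hbmax gA hgA)⟩
    obtain ⟨g0, hg0, hblt0⟩ := hex
    have hptk : p g0 < p gk := (hmono _ hg0 _ hgk hblt0).1
    have hne1k : g1 ≠ gk := by
      intro h
      have h1 := hpmin g0 hg0
      rw [h] at h1
      omega
    have hb1k : b g1 < b gk := by
      rcases lt_trichotomy (b g1) (b gk) with h | h | h
      · exact h
      · exact absurd (hbinj _ hg1 _ hgk h) hne1k
      · have := (hmono _ hgk _ hg1 h).1
        have := hpmin gk hgk
        omega
    -- the syzygy generator s
    have hkey : (ℓ:ℤ) + α + β ≤ (ℓ:ℤ) + (p g1 + β) * α - b gk * β := by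
      nlinarith [mul_nonneg (by linarith [hp1 g1 hg1] : (0:ℤ) ≤ p g1 - 1) hαZ.le,
        mul_nonneg hβZ.le (by linarith [hbα gk hgk] : (0:ℤ) ≤ (α:ℤ) - b gk - 1)]
    obtain ⟨s, hseq⟩ : ∃ s : ℕ, (s:ℤ) = (ℓ:ℤ) + (p g1 + β) * α - b gk * β :=
      ⟨((ℓ:ℤ) + (p g1 + β) * α - b gk * β).toNat,
        Int.toNat_of_nonneg (le_trans (by positivity) hkey)⟩
    have hs1 : s ∈ shift (twoGen α β) g1 :=
      (mem_shift_iff_param hα0 hβ0 hcop (hb0 g1 hg1) (hbα g1 hg1) (hb0 gk hgk) (hbα gk hgk)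
        (heq g1 hg1) hseq).mpr (Or.inr ⟨hb1k, le_refl _⟩)
    have hsk : s ∈ shift (twoGen α β) gk :=
      (mem_shift_iff_param hα0 hβ0 hcop (hb0 gk hgk) (hbα gk hgk) (hb0 gk hgk) (hbα gk hgk)
        (heq gk hgk) hseq).mpr (Or.inl ⟨le_refl _, le_of_lt (hmono _ hg1 _ hgk hb1k).2⟩)
    have hsSyz : s ∈ Syz (twoGen α β) I :=
      mem_Syz'.mpr ⟨g1, hg1, gk, hgk, hne1k, hs1, hsk⟩
    -- s - α is not in Syz
    have hsubα : ∀ y : ℕ, (y:ℤ) = (s:ℤ) - α → y ∉ Syz (twoGen α β) I := by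
      intro y hy hySyz
      obtain ⟨g, hg, g', hg', hne', hy1, hy2⟩ := mem_Syz'.mp hySyz
      have hyeq : (y:ℤ) = (ℓ:ℤ) + (p g1 + β - 1) * α - b gk * β := by
        rw [hy, hseq]; ring
      have force : ∀ gg, gg ∈ I → y ∈ shift (twoGen α β) gg → gg = gk := by
        intro gg hgg hmem
        rw [mem_shift_iff_param hα0 hβ0 hcop (hb0 gg hgg) (hbα gg hgg) (hb0 gk hgk)
          (hbα gk hgk) (heq gg hgg) hyeq] at hmem
        rcases hmem with ⟨ha, hb⟩ | ⟨ha, hb⟩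
        · exact hbinj _ hgg _ hgk (le_antisymm (hbmax _ hgg) ha)
        · exact absurd hb (by have := hpmin gg hgg; omega)
      exact hne' ((force g hg hy1).trans (force g' hg' hy2).symm)
    -- s - β is not in Syz
    have hsubβ : ∀ y : ℕ, (y:ℤ) = (s:ℤ) - β → y ∉ Syz (twoGen α β) I := by
      intro y hy hySyz
      obtain ⟨g, hg, g', hg', hne', hy1, hy2⟩ := mem_Syz'.mp hySyz
      by_cases hcase : b gk = (α:ℤ) - 1
      · have hyeq : (y:ℤ) = (ℓ:ℤ) + p g1 * α - 0 * β := by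
          rw [hy, hseq]; linear_combination (-(β:ℤ)) * hcase
        have force : ∀ gg, gg ∈ I → y ∈ shift (twoGen α β) gg → gg = g1 := by
          intro gg hgg hmem
          rw [mem_shift_iff_param hα0 hβ0 hcop (hb0 gg hgg) (hbα gg hgg) (le_refl (0:ℤ)) hαZ
            (heq gg hgg) hyeq] at hmem
          rcases hmem with ⟨ha, hb⟩ | ⟨ha, hb⟩
          · exact hpinj _ hgg _ hg1 (le_antisymm hb (hpmin gg hgg))
          · exact absurd ha (by have := hb0 gg hgg; omega)
        exact hne' ((force g hg hy1).trans (force g' hg' hy2).symm)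
      · have hlt : b gk + 1 < α := by have := hbα gk hgk; omega
        have hyeq : (y:ℤ) = (ℓ:ℤ) + (p g1 + β) * α - (b gk + 1) * β := by
          rw [hy, hseq]; ring
        have force : ∀ gg, gg ∈ I → y ∈ shift (twoGen α β) gg → gg = g1 := by
          intro gg hgg hmem
          rw [mem_shift_iff_param hα0 hβ0 hcop (hb0 gg hgg) (hbα gg hgg)
            (by have := hb0 gk hgk; omega : (0:ℤ) ≤ b gk + 1) hlt
            (heq gg hgg) hyeq] at hmem
          rcases hmem with ⟨ha, hb⟩ | ⟨ha, hb⟩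
          · exact absurd ha (by have := hbmax gg hgg; omega)
          · exact hpinj _ hgg _ hg1 (le_antisymm (by omega) (hpmin gg hgg))
        exact hne' ((force g hg hy1).trans (force g' hg' hy2).symm)
    -- s is a minimal generator of Syz
    have hJgen : Syz (twoGen α β) I = ⋃ x ∈ J, shift (twoGen α β) x := hJ.2.1
    have hsJ : s ∈ J := by
      have hsm : s ∈ ⋃ x ∈ J, shift (twoGen α β) x := hJgen ▸ hsSyz
      obtain ⟨h, hh, hmem⟩ := mem_iUnion₂.mp hsm
      obtain ⟨u, v, hse⟩ := mem_shift'.mp hmem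
      have hseZ : (s:ℤ) = (h:ℤ) + ((u:ℤ) * α + (v:ℤ) * β) := by exact_mod_cast hse
      rcases Nat.eq_zero_or_pos u with hu | hu
      · rcases Nat.eq_zero_or_pos v with hv | hv
        · subst hu; subst hv
          have : s = h := by simpa using hse
          rw [this]; exact hh
        · exfalso
          refine hsubβ (h + (0 * α + (v - 1) * β)) ?_ (Syz_add (hJ.1 hh) ⟨0, v - 1, rfl⟩)
          have hvZ : ((v - 1 : ℕ) : ℤ) = (v:ℤ) - 1 := by omega
          push_cast [hvZ]
          subst hu
          push_cast at hseZ ⊢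
          linear_combination -hseZ
      · exfalso
        refine hsubα (h + ((u - 1) * α + v * β)) ?_ (Syz_add (hJ.1 hh) ⟨u - 1, v, rfl⟩)
        have huZ : ((u - 1 : ℕ) : ℤ) = (u:ℤ) - 1 := by omega
        push_cast [huZ]
        linear_combination -hseZ
    exact ⟨s, hsJ, by linarith [hkey, hseq]⟩
  refine ⟨main, ?_⟩
  intro x hx
  by_contra hxD
  obtain ⟨h, hh, hle⟩ := main x hxD
  have hhM : (h:ℤ) ≤ M := by exact_mod_cast hM.2 hh
  linarith
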